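/- For n ∈ ℕ and integer 0 ≤ k ≤ n define f(k) := −(2k−n)⁴/(12n²) + (2k−n)²/(2n) − 1/4, g(k) := (2k−n)⁸/(288n⁴) − 3(2k−n)⁶/(40n³) + 19(2k−n)⁴/(48n²) − 11(2k−n)²/(24n) + 1/32, and T̃(k) := (1/2)·ln(πn/2) + (k − n/2)²/(n/2) − f(k)/n + ( −g(k) + f(k)²/2 )/n². Then there exist constants C > 0 and N such that for all n ≥ N, | Σ_{k=0}^{n} (C(n,k)/2^n)·T̃(k) − ( (1/2)·ln(π e n / 2) − 1/(12 n²) ) | ≤ C / n³. -/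

import Mathlib

/-!
Write `s = 2k - n`. The `s⁸` terms of `-g + f²/2` cancel, so `T̃(k)` is an even polynomial of
degree six in `s`. Under `Binomial(n, 1/2)`, `s` is the position after `n` steps of a simple
symmetric random walk, and Pascal's rule gives `E h(S_{n+1}) = E (h(S_n - 1) + h(S_n + 1)) / 2`.
Induction on `n` then yields `E S_n² = n`, `E S_n⁴ = 3n² - 2n` and `E S_n⁶ = 15n³ - 30n² + 16n`.
Substituting these moments computes the expectation exactly: it exceeds
`(1/2) ln(πen/2) - 1/(12n²)` by `(16 - 15n)/(30n⁴)`, which is at most `1/(2n³)` in absolute value.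
-/

/-- First-order Stirling correction polynomial `f(k)`. -/
noncomputable def fcorr (n k : ℕ) : ℝ :=
  -((2 * (k : ℝ) - n) ^ 4) / (12 * (n : ℝ) ^ 2)
    + (2 * (k : ℝ) - n) ^ 2 / (2 * (n : ℝ)) - 1 / 4

/-- Second-order Stirling correction polynomial `g(k)`. -/
noncomputable def gcorr (n k : ℕ) : ℝ :=
  (2 * (k : ℝ) - n) ^ 8 / (288 * (n : ℝ) ^ 4)
    - 3 * (2 * (k : ℝ) - n) ^ 6 / (40 * (n : ℝ) ^ 3)
    + 19 * (2 * (k : ℝ) - n) ^ 4 / (48 * (n : ℝ) ^ 2)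
    - 11 * (2 * (k : ℝ) - n) ^ 2 / (24 * (n : ℝ)) + 1 / 32

/-- Truncated Taylor expansion `T̃(k)` of the approximate self-information. -/
noncomputable def Ttilde (n k : ℕ) : ℝ :=
  (1 / 2) * Real.log (Real.pi * n / 2) + ((k : ℝ) - n / 2) ^ 2 / ((n : ℝ) / 2)
    - fcorr n k / n + (-gcorr n k + (fcorr n k) ^ 2 / 2) / (n : ℝ) ^ 2

open Finset

noncomputable def walkMoment (j n : ℕ) : ℝ :=
  ∑ k ∈ range (n + 1), (n.choose k : ℝ) / 2 ^ n * (2 * (k : ℝ) - n) ^ j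

lemma walkMoment_succ (j n : ℕ) :
    walkMoment j (n + 1) = ∑ k ∈ range (n + 1), (n.choose k : ℝ) / 2 ^ (n + 1) *
      ((2 * (k : ℝ) - n - 1) ^ j + (2 * (k : ℝ) - n + 1) ^ j) := by
  -- Pascal's rule, with a summand that ignores the complementary index `n + 1 - i`.
  have pascal := sum_choose_succ_mul (R := ℝ) (fun i _ ↦ (2 * (i : ℝ) - (n + 1 : ℕ)) ^ j) n
  simp only [walkMoment, div_mul_eq_mul_div, ← sum_div, pascal, ← sum_add_distrib]
  congr 1
  refine sum_congr rfl fun k _ ↦ ?_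
  push_cast
  ring

lemma walkMoment_succ_eq_sum (j n : ℕ) :
    walkMoment j (n + 1) =
      ∑ m ∈ range (j + 1), (j.choose m : ℝ) * ((1 + (-1) ^ (j - m)) / 2) * walkMoment m n := by
  have binom (s : ℝ) : (s - 1) ^ j + (s + 1) ^ j =
      ∑ m ∈ range (j + 1), (j.choose m : ℝ) * (1 + (-1) ^ (j - m)) * s ^ m := by
    rw [sub_eq_add_neg, add_pow, add_pow, ← sum_add_distrib]
    refine sum_congr rfl fun m _ ↦ ?_
    ring
  rw [walkMoment_succ]
  simp only [binom, walkMoment, mul_sum]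
  rw [sum_comm]
  refine sum_congr rfl fun m _ ↦ sum_congr rfl fun k _ ↦ ?_
  ring

lemma walkMoment_zero (n : ℕ) : walkMoment 0 n = 1 := by
  simp only [walkMoment, pow_zero, mul_one, ← sum_div]
  rw [div_eq_one_iff_eq (by positivity)]
  exact_mod_cast Nat.sum_range_choose n

lemma walkMoment_two (n : ℕ) : walkMoment 2 n = n := by
  induction n with
  | zero => simp [walkMoment]
  | succ n ih =>
    rw [walkMoment_succ_eq_sum]
    norm_num [sum_range_succ, ih, Nat.choose, walkMoment_zero]
    ring

lemma walkMoment_four (n : ℕ) : walkMoment 4 n = 3 * (n : ℝ) ^ 2 - 2 * n := by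
  induction n with
  | zero => simp [walkMoment]
  | succ n ih =>
    rw [walkMoment_succ_eq_sum]
    norm_num [sum_range_succ, ih, Nat.choose, walkMoment_zero, walkMoment_two]
    ring

lemma walkMoment_six (n : ℕ) :
    walkMoment 6 n = 15 * (n : ℝ) ^ 3 - 30 * (n : ℝ) ^ 2 + 16 * n := by
  induction n with
  | zero => simp [walkMoment]
  | succ n ih =>
    rw [walkMoment_succ_eq_sum]
    norm_num [sum_range_succ, ih, Nat.choose, walkMoment_zero, walkMoment_two, walkMoment_four]
    ring

lemma sum_choose_div_mul_even_sextic (n : ℕ) (a₀ a₂ a₄ a₆ : ℝ) :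
    ∑ k ∈ range (n + 1), (n.choose k : ℝ) / 2 ^ n * (a₀ + a₂ * (2 * (k : ℝ) - n) ^ 2
        + a₄ * (2 * (k : ℝ) - n) ^ 4 + a₆ * (2 * (k : ℝ) - n) ^ 6)
      = a₀ + a₂ * n + a₄ * (3 * (n : ℝ) ^ 2 - 2 * n)
        + a₆ * (15 * (n : ℝ) ^ 3 - 30 * (n : ℝ) ^ 2 + 16 * n) := by
  calc
    _ = a₀ * walkMoment 0 n + a₂ * walkMoment 2 n + a₄ * walkMoment 4 n
        + a₆ * walkMoment 6 n := by
      simp only [walkMoment, mul_sum, ← sum_add_distrib]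
      exact sum_congr rfl fun k _ ↦ by ring
    _ = _ := by rw [walkMoment_zero, walkMoment_two, walkMoment_four, walkMoment_six, mul_one]

lemma Ttilde_eq_even_sextic (n k : ℕ) (hn : n ≠ 0) :
    Ttilde n k = ((1 / 2) * Real.log (Real.pi * n / 2) + 1 / (4 * n))
      + (1 / (2 * n) - 1 / (2 * (n : ℝ) ^ 2) + 1 / (3 * (n : ℝ) ^ 3)) * (2 * (k : ℝ) - n) ^ 2
      + (1 / (12 * (n : ℝ) ^ 3) - 1 / (4 * (n : ℝ) ^ 4)) * (2 * (k : ℝ) - n) ^ 4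
      + 1 / (30 * (n : ℝ) ^ 5) * (2 * (k : ℝ) - n) ^ 6 := by
  unfold Ttilde fcorr gcorr
  field_simp
  ring

lemma log_pi_exp_mul_div_two {x : ℝ} (hx : x ≠ 0) :
    Real.log (Real.pi * Real.exp 1 * x / 2) = Real.log (Real.pi * x / 2) + 1 := by
  rw [mul_right_comm, mul_div_right_comm, Real.log_mul (by positivity) (Real.exp_ne_zero 1),
    Real.log_exp]

lemma sum_choose_div_mul_Ttilde (n : ℕ) (hn : n ≠ 0) :
    ∑ k ∈ range (n + 1), (n.choose k : ℝ) / 2 ^ n * Ttilde n k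
      = (1 / 2) * Real.log (Real.pi * Real.exp 1 * n / 2) - 1 / (12 * (n : ℝ) ^ 2)
        + (16 - 15 * n) / (30 * (n : ℝ) ^ 4) := by
  have hn' : (n : ℝ) ≠ 0 := Nat.cast_ne_zero.mpr hn
  simp only [Ttilde_eq_even_sextic n _ hn]
  rw [sum_choose_div_mul_even_sextic, log_pi_exp_mul_div_two hn']
  field_simp
  ring

lemma abs_sixteen_sub_fifteen_mul_div_le {x : ℝ} (hx : 1 ≤ x) :
    |(16 - 15 * x) / (30 * x ^ 4)| ≤ (1 / 2) / x ^ 3 := by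
  have hx0 : 0 < x := by linarith
  have habs : |16 - 15 * x| ≤ 15 * x := abs_le.mpr ⟨by linarith, by linarith⟩
  rw [abs_div, abs_of_pos (by positivity : (0 : ℝ) < 30 * x ^ 4),
    div_le_div_iff₀ (by positivity) (by positivity)]
  nlinarith [mul_le_mul_of_nonneg_right habs (pow_nonneg hx0.le 3)]

/-- Expectation of `T̃` under the `Binomial(n, 1/2)` distribution:
`E[T̃(X)] = (1/2)·ln(πen/2) − 1/(12n²) + O(1/n³)`. -/
theorem binomial_expected_Ttilde_expansion :
    ∃ C : ℝ, 0 < C ∧ ∃ N : ℕ, ∀ n : ℕ, N ≤ n →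
      |(∑ k ∈ Finset.range (n + 1), ((n.choose k : ℝ) / 2 ^ n) * Ttilde n k)
          - ((1 / 2) * Real.log (Real.pi * Real.exp 1 * n / 2)
              - 1 / (12 * (n : ℝ) ^ 2))|
        ≤ C / (n : ℝ) ^ 3 := by
  refine ⟨1 / 2, by norm_num, 1, fun n hn ↦ ?_⟩
  rw [sum_choose_div_mul_Ttilde n (by omega), add_sub_cancel_left]
  exact abs_sixteen_sub_fifteen_mul_div_le (by exact_mod_cast hn)
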